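/- Let N ≥ 2, let k = (k_0,…,k_{r-1}) be positive integers summing to N, and let g_1,…,g_N : Fin r → ℝ each satisfy Σ_m k_m g_ℓ(m) = 0. Then Σ_{ℓ=1}^N g_ℓ(x_ℓ) = 0 for all x in the multislice V_{N,k} if and only if g_1 = g_2 = ⋯ = g_N. -/

import Mathlib

/-!
If all `g ℓ` equal `f`, the sum at any `x` in the multislice is `∑ m, k m * f m = 0`.
Conversely, for `i ≠ j` and values `a ≠ b` some `x` in the multislice has `x i = a`,
`x j = b`, since every value occurs and the multislice is stable under permuting
coordinates. Comparing the sums at `x` and at `x ∘ swap i j` gives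
`g i a - g j a = g i b - g j b`, so `g i - g j` is a constant `c`, and then
`∑ m, k m * (g i m - g j m) = N * c = 0` forces `c = 0`.
-/

open scoped Classical BigOperators

/-- The multislice: tuples `x : Fin N → Fin r` in which each value `m` is
attained exactly `k m` times. -/
def multislice (N r : ℕ) (k : Fin r → ℕ) : Finset (Fin N → Fin r) :=
  Finset.univ.filter fun x => ∀ m : Fin r,
    (Finset.univ.filter fun ℓ => x ℓ = m).card = k m

lemma Finset.card_filter_sigma_fst_eq {ι : Type*} [Fintype ι] (β : ι → Type*)
    [∀ i, Fintype (β i)] (i : ι) :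
    (Finset.univ.filter fun p : (Σ i, β i) => p.1 = i).card = Fintype.card (β i) := by
  rw [show (Finset.univ.filter fun p : (Σ i, β i) => p.1 = i) =
      ({i} : Finset ι).sigma fun _ => Finset.univ by ext; simp]
  simp

lemma Equiv.Perm.exists_apply_eq_and_apply_eq {α : Type*} [DecidableEq α] {i j p q : α}
    (hij : i ≠ j) (hpq : p ≠ q) : ∃ σ : Equiv.Perm α, σ i = p ∧ σ j = q := by
  set τ := Equiv.swap i p
  have hτi : τ i = p := Equiv.swap_apply_left i p
  have hpτj : p ≠ τ j := hτi ▸ τ.injective.ne hij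
  refine ⟨τ.trans (Equiv.swap (τ j) q), ?_, Equiv.swap_apply_left (τ j) q⟩
  rw [Equiv.trans_apply, hτi, Equiv.swap_apply_of_ne_of_ne hpτj hpq]

lemma Fintype.sum_comp_swap_sub_sum {ι α M : Type*} [Fintype ι] [DecidableEq ι]
    [AddCommGroup M] (F : ι → α → M) (x : ι → α) {i j : ι} (hij : i ≠ j) :
    ∑ ℓ, F ℓ (x (Equiv.swap i j ℓ)) - ∑ ℓ, F ℓ (x ℓ) =
      F i (x j) - F i (x i) + (F j (x i) - F j (x j)) := by
  rw [← Finset.sum_sub_distrib, Fintype.sum_eq_add i j hij fun ℓ hℓ => by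
      rw [Equiv.swap_apply_of_ne_of_ne hℓ.1 hℓ.2, sub_self],
    Equiv.swap_apply_left, Equiv.swap_apply_right]

section multislice

variable {N r : ℕ} {k : Fin r → ℕ}

lemma mem_multislice {x : Fin N → Fin r} :
    x ∈ multislice N r k ↔ ∀ m, (Finset.univ.filter fun ℓ => x ℓ = m).card = k m := by
  simp [multislice]

lemma multislice_nonempty (hk : ∑ m, k m = N) : (multislice N r k).Nonempty := by
  let e : Fin N ≃ Σ m, Fin (k m) := (finCongr hk.symm).trans finSigmaFinEquiv.symm
  refine ⟨fun ℓ => (e ℓ).1, mem_multislice.2 fun m => ?_⟩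
  rw [← Fintype.card_fin (k m), ← Finset.card_filter_sigma_fst_eq (fun m => Fin (k m))]
  exact Finset.card_equiv e (by simp)

lemma comp_perm_mem_multislice {x : Fin N → Fin r} (hx : x ∈ multislice N r k)
    (σ : Equiv.Perm (Fin N)) : x ∘ σ ∈ multislice N r k := by
  refine mem_multislice.2 fun m => ?_
  rw [← mem_multislice.1 hx m]
  exact Finset.card_equiv σ (by simp)

lemma exists_mem_multislice_apply_eq_and_apply_eq (hk : ∑ m, k m = N)
    (hpos : ∀ m, 1 ≤ k m) {i j : Fin N} (hij : i ≠ j) {a b : Fin r} (hab : a ≠ b) :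
    ∃ x ∈ multislice N r k, x i = a ∧ x j = b := by
  obtain ⟨x, hx⟩ := multislice_nonempty hk
  have hsurj : ∀ m, ∃ ℓ, x ℓ = m := fun m => by
    obtain ⟨ℓ, hℓ⟩ := Finset.card_pos.1 ((mem_multislice.1 hx m).symm ▸ hpos m)
    exact ⟨ℓ, (Finset.mem_filter.1 hℓ).2⟩
  obtain ⟨p, rfl⟩ := hsurj a
  obtain ⟨q, rfl⟩ := hsurj b
  obtain ⟨σ, hσi, hσj⟩ := Equiv.Perm.exists_apply_eq_and_apply_eq hij (ne_of_apply_ne x hab)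
  exact ⟨x ∘ σ, comp_perm_mem_multislice hx σ, by simp [hσi], by simp [hσj]⟩

lemma sum_comp_of_mem_multislice {M : Type*} [AddCommMonoid M] {x : Fin N → Fin r}
    (hx : x ∈ multislice N r k) (f : Fin r → M) : ∑ ℓ, f (x ℓ) = ∑ m, k m • f m := by
  rw [← Finset.sum_fiberwise Finset.univ x]
  refine Finset.sum_congr rfl fun m _ => ?_
  rw [Finset.sum_congr rfl fun ℓ hℓ => by rw [(Finset.mem_filter.1 hℓ).2],
    Finset.sum_const, mem_multislice.1 hx m]

end multislice

theorem sum_vanishes_iff_all_equal_general (N r : ℕ) (k : Fin r → ℕ)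
    (hk : ∑ m, k m = N) (hpos : ∀ m, 1 ≤ k m) (g : Fin N → Fin r → ℝ)
    (hg : ∀ ℓ, ∑ m, (k m : ℝ) * g ℓ m = 0) :
    (∀ x ∈ multislice N r k, ∑ ℓ, g ℓ (x ℓ) = 0) ↔ ∀ i j, g i = g j := by
  constructor
  · intro H i j
    rcases eq_or_ne i j with rfl | hij
    · rfl
    have hconst : ∀ a b, g i a - g j a = g i b - g j b := by
      intro a b
      rcases eq_or_ne a b with rfl | hab
      · rfl
      obtain ⟨x, hx, rfl, rfl⟩ := exists_mem_multislice_apply_eq_and_apply_eq hk hpos hij hab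
      have hswap := Fintype.sum_comp_swap_sub_sum g x hij
      have hx' := H _ (comp_perm_mem_multislice hx (Equiv.swap i j))
      simp only [Function.comp_apply] at hx'
      rw [H x hx, hx'] at hswap
      linarith
    funext a
    have hsum : ∑ m, (k m : ℝ) * (g i m - g j m) = 0 := by
      simp [mul_sub, Finset.sum_sub_distrib, hg]
    simp_rw [hconst _ a, ← Finset.sum_mul, ← Nat.cast_sum, hk] at hsum
    exact sub_eq_zero.1 ((mul_eq_zero.1 hsum).resolve_left (Nat.cast_ne_zero.2 i.pos.ne'))
  · intro h x hx
    rcases isEmpty_or_nonempty (Fin N) with _ | ⟨⟨ℓ₀⟩⟩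
    · simp
    simp_rw [h _ ℓ₀, sum_comp_of_mem_multislice hx, nsmul_eq_mul]
    exact hg ℓ₀

/-- For `g_1, …, g_N` in `K_{N,k}`, the sum `∑ ℓ, g_ℓ(x_ℓ)` vanishes on the
whole multislice iff all the `g_ℓ` coincide. -/
theorem sum_vanishes_iff_all_equal (N r : ℕ) (hN : 2 ≤ N) (k : Fin r → ℕ)
    (hk : ∑ m, k m = N) (hpos : ∀ m, 1 ≤ k m) (g : Fin N → Fin r → ℝ)
    (hg : ∀ ℓ, ∑ m, (k m : ℝ) * g ℓ m = 0) :
    (∀ x ∈ multislice N r k, ∑ ℓ, g ℓ (x ℓ) = 0) ↔ ∀ i j, g i = g j :=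
  sum_vanishes_iff_all_equal_general N r k hk hpos g hg
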